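/- Let α_sr, μ_sr, Ω_sr, α_sd, μ_sd, Ω_sd, η₁, K all be positive reals. For ρ > 0 define Φ₁(ρ) = η₁/(ρK), A(ρ) = γ(μ_sr, (μ_sr/Ω_sr^{α_sr})·Φ₁(ρ)^{α_sr/2})/Γ(μ_sr), B(ρ) = γ(μ_sd, (μ_sd/Ω_sd^{α_sd})·Φ₁(ρ)^{α_sd/2})/Γ(μ_sd), and the outage probability P₁(ρ) = A(ρ) + B(ρ) − A(ρ)B(ρ). Then with d = (1/2)·min(α_sr μ_sr, α_sd μ_sd), there exists a constant C > 0 such that lim_{ρ→∞} ρ^d · P₁(ρ) = C. Hence the diversity order of symbol s₁ in CRS-NOMA is (1/2)·min(α_sr μ_sr, α_sd μ_sd). -/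

import Mathlib

/-!
Near `0` the integrand of `γ(s, x)` is squeezed between `e^{-x} t^{s-1}` and `t^{s-1}`, so
`γ(s, x) ~ x^s / s`. As `Φ₁(ρ) ∝ 1/ρ`, each CDF term then decays like a constant times
`ρ^{-α μ / 2}`, and in `A + B - AB` the slower of the two decay rates dominates: the product
`AB` is negligible and the faster term vanishes after multiplying by `ρ^d`.
-/

open Real Filter

/-- The lower incomplete Gamma function γ(s, x) = ∫₀ˣ t^{s−1} e^{−t} dt. -/
noncomputable def lowerGamma (s x : ℝ) : ℝ :=
  ∫ t in (0 : ℝ)..x, t ^ (s - 1) * Real.exp (-t)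

open Topology MeasureTheory

section LowerGamma

variable {s : ℝ}

lemma integral_rpow_sub_one (hs : 0 < s) (x : ℝ) :
    ∫ t in (0 : ℝ)..x, t ^ (s - 1) = x ^ s / s := by
  rw [integral_rpow (Or.inl (by linarith)), sub_add_cancel, zero_rpow hs.ne', sub_zero]

lemma intervalIntegrable_rpow_sub_one (hs : 0 < s) (x : ℝ) :
    IntervalIntegrable (fun t : ℝ => t ^ (s - 1)) volume 0 x :=
  intervalIntegral.intervalIntegrable_rpow' (by linarith)

lemma intervalIntegrable_rpow_sub_one_mul_exp_neg (hs : 0 < s) (x : ℝ) :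
    IntervalIntegrable (fun t : ℝ => t ^ (s - 1) * exp (-t)) volume 0 x :=
  (intervalIntegrable_rpow_sub_one hs x).mul_continuousOn (by fun_prop)

lemma lowerGamma_le_rpow_div (hs : 0 < s) {x : ℝ} (hx : 0 ≤ x) :
    lowerGamma s x ≤ x ^ s / s := by
  rw [← integral_rpow_sub_one hs]
  refine intervalIntegral.integral_mono_on hx (intervalIntegrable_rpow_sub_one_mul_exp_neg hs x)
    (intervalIntegrable_rpow_sub_one hs x) fun t ht => ?_
  exact mul_le_of_le_one_right (rpow_nonneg ht.1 _) (exp_le_one_iff.mpr (neg_nonpos.mpr ht.1))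

lemma exp_neg_mul_rpow_div_le_lowerGamma (hs : 0 < s) {x : ℝ} (hx : 0 ≤ x) :
    exp (-x) * (x ^ s / s) ≤ lowerGamma s x := by
  rw [← integral_rpow_sub_one hs, ← intervalIntegral.integral_const_mul]
  refine intervalIntegral.integral_mono_on hx ((intervalIntegrable_rpow_sub_one hs x).const_mul _)
    (intervalIntegrable_rpow_sub_one_mul_exp_neg hs x) fun t ht => ?_
  rw [mul_comm]
  exact mul_le_mul_of_nonneg_left (exp_le_exp.mpr (neg_le_neg ht.2)) (rpow_nonneg ht.1 _)

lemma tendsto_lowerGamma_div_rpow (hs : 0 < s) :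
    Tendsto (fun x => lowerGamma s x / x ^ s) (𝓝[>] 0) (𝓝 (1 / s)) := by
  have hexp : Tendsto (fun x : ℝ => exp (-x) / s) (𝓝[>] 0) (𝓝 (1 / s)) := by
    have h := ((continuous_exp.comp continuous_neg).tendsto 0).div_const s
    simp only [Function.comp_apply, neg_zero, exp_zero] at h
    exact h.mono_left nhdsWithin_le_nhds
  refine tendsto_of_tendsto_of_tendsto_of_le_of_le' hexp tendsto_const_nhds ?_ ?_
  all_goals
    filter_upwards [self_mem_nhdsWithin] with x (hx : 0 < x)
    have hxs : 0 < x ^ s := rpow_pos_of_pos hx s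
  · rw [le_div_iff₀ hxs, div_mul_eq_mul_div, mul_div_assoc]
    exact exp_neg_mul_rpow_div_le_lowerGamma hs hx.le
  · rw [div_le_iff₀ hxs, one_div_mul_eq_div]
    exact lowerGamma_le_rpow_div hs hx.le

lemma tendsto_rpow_mul_lowerGamma_mul_rpow_neg (hs : 0 < s) {a c : ℝ} (ha : 0 < a) (hc : 0 < c) :
    Tendsto (fun ρ => ρ ^ (a * s) * lowerGamma s (c * ρ ^ (-a))) atTop (𝓝 (c ^ s / s)) := by
  have hx : Tendsto (fun ρ : ℝ => c * ρ ^ (-a)) atTop (𝓝[>] 0) := by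
    refine tendsto_nhdsWithin_iff.mpr ⟨?_, ?_⟩
    · simpa using (tendsto_rpow_neg_atTop ha).const_mul c
    · filter_upwards [eventually_gt_atTop 0] with ρ hρ using mul_pos hc (rpow_pos_of_pos hρ _)
  have h := ((tendsto_lowerGamma_div_rpow hs).comp hx).const_mul (c ^ s)
  rw [mul_one_div] at h
  refine h.congr' ?_
  filter_upwards [eventually_gt_atTop 0] with ρ hρ
  have hρs : ρ ^ (a * s) * (c * ρ ^ (-a)) ^ s = c ^ s := by
    rw [mul_rpow hc.le (rpow_nonneg hρ.le _), ← rpow_mul hρ.le, mul_left_comm,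
      ← rpow_add hρ, neg_mul, add_neg_cancel, rpow_zero, mul_one]
  have hxs : (c * ρ ^ (-a)) ^ s ≠ 0 := (rpow_pos_of_pos (by positivity) s).ne'
  simp only [Function.comp_apply]
  rw [← hρs]
  field_simp

end LowerGamma

section UnionAsymptotics

variable {f g : ℝ → ℝ} {a b L : ℝ}

lemma tendsto_rpow_mul_zero_of_lt (hba : b < a)
    (hf : Tendsto (fun ρ => ρ ^ a * f ρ) atTop (𝓝 L)) :
    Tendsto (fun ρ => ρ ^ b * f ρ) atTop (𝓝 0) := by
  have h := (tendsto_rpow_neg_atTop (sub_pos.mpr hba)).mul hf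
  rw [zero_mul] at h
  refine h.congr' ?_
  filter_upwards [eventually_gt_atTop 0] with ρ hρ
  rw [← mul_assoc, ← rpow_add hρ, neg_sub, sub_add_cancel]

lemma tendsto_zero_of_tendsto_rpow_mul (ha : 0 < a)
    (hf : Tendsto (fun ρ => ρ ^ a * f ρ) atTop (𝓝 L)) : Tendsto f atTop (𝓝 0) := by
  simpa using tendsto_rpow_mul_zero_of_lt ha hf

lemma tendsto_rpow_min_mul (b : ℝ) (hf : Tendsto (fun ρ => ρ ^ a * f ρ) atTop (𝓝 L)) :
    Tendsto (fun ρ => ρ ^ min a b * f ρ) atTop (𝓝 (if a ≤ b then L else 0)) := by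
  split_ifs with hab
  · rwa [min_eq_left hab]
  · rw [min_eq_right (not_le.mp hab).le]
    exact tendsto_rpow_mul_zero_of_lt (not_le.mp hab) hf

theorem exists_tendsto_rpow_min_mul_add_sub_mul {La Lb : ℝ} (ha : 0 < a) (hLa : 0 < La)
    (hLb : 0 < Lb) (hf : Tendsto (fun ρ => ρ ^ a * f ρ) atTop (𝓝 La))
    (hg : Tendsto (fun ρ => ρ ^ b * g ρ) atTop (𝓝 Lb)) :
    ∃ C, 0 < C ∧ Tendsto (fun ρ => ρ ^ min a b * (f ρ + g ρ - f ρ * g ρ)) atTop (𝓝 C) := by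
  set C := (if a ≤ b then La else 0) + (if b ≤ a then Lb else 0)
  have hC : 0 < C := by
    rcases le_total a b with hab | hab <;> simp only [C, hab, if_true] <;> split_ifs <;> linarith
  refine ⟨C, hC, ?_⟩
  have hg' := tendsto_rpow_min_mul a hg
  rw [min_comm] at hg'
  have h := (tendsto_rpow_min_mul b hf).add
    (hg'.mul ((tendsto_zero_of_tendsto_rpow_mul ha hf).const_sub 1))
  rw [sub_zero, mul_one] at h
  exact h.congr fun ρ => by ring

end UnionAsymptotics

lemma tendsto_rpow_mul_alphaMu_cdf {α μ Ω η K : ℝ} (hα : 0 < α) (hμ : 0 < μ) (hΩ : 0 < Ω)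
    (hη : 0 < η) (hK : 0 < K) :
    Tendsto (fun ρ : ℝ => ρ ^ (α * μ / 2) *
        (lowerGamma μ ((μ / Ω ^ α) * (η / (ρ * K)) ^ (α / 2)) / Gamma μ)) atTop
      (𝓝 (((μ / Ω ^ α) * (η / K) ^ (α / 2)) ^ μ / μ / Gamma μ)) := by
  have h := (tendsto_rpow_mul_lowerGamma_mul_rpow_neg hμ (half_pos hα)
    (by positivity : 0 < (μ / Ω ^ α) * (η / K) ^ (α / 2))).div_const (Gamma μ)
  refine h.congr' ?_
  filter_upwards [eventually_gt_atTop 0] with ρ hρ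
  have hΦ : (η / (ρ * K)) ^ (α / 2) = (η / K) ^ (α / 2) * ρ ^ (-(α / 2)) := by
    rw [mul_comm ρ K, ← div_div, div_eq_mul_inv _ ρ,
      mul_rpow (by positivity) (inv_nonneg.mpr hρ.le), inv_rpow hρ.le, rpow_neg hρ.le]
  rw [hΦ, ← mul_assoc]
  ring_nf

/-- Diversity order of symbol s₁ in CRS-NOMA over α-μ fading:
with d = (1/2)·min(α_sr μ_sr, α_sd μ_sd), the outage probability
P₁(ρ) = A(ρ) + B(ρ) − A(ρ)B(ρ) satisfies ρ^d · P₁(ρ) → C for some constant C > 0. -/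
theorem noma_s1_diversity_order
    (αsr μsr Ωsr αsd μsd Ωsd η₁ K : ℝ)
    (hαsr : 0 < αsr) (hμsr : 0 < μsr) (hΩsr : 0 < Ωsr)
    (hαsd : 0 < αsd) (hμsd : 0 < μsd) (hΩsd : 0 < Ωsd)
    (hη₁ : 0 < η₁) (hK : 0 < K) :
    ∃ C : ℝ, 0 < C ∧
      Tendsto
        (fun ρ : ℝ =>
          ρ ^ ((1 / 2) * min (αsr * μsr) (αsd * μsd)) *
            ((lowerGamma μsr ((μsr / Ωsr ^ αsr) * (η₁ / (ρ * K)) ^ (αsr / 2)) /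
                Real.Gamma μsr) +
              (lowerGamma μsd ((μsd / Ωsd ^ αsd) * (η₁ / (ρ * K)) ^ (αsd / 2)) /
                Real.Gamma μsd) -
              (lowerGamma μsr ((μsr / Ωsr ^ αsr) * (η₁ / (ρ * K)) ^ (αsr / 2)) /
                Real.Gamma μsr) *
              (lowerGamma μsd ((μsd / Ωsd ^ αsd) * (η₁ / (ρ * K)) ^ (αsd / 2)) /
                Real.Gamma μsd)))
        atTop (nhds C) := by
  rw [one_div_mul_eq_div, ← min_div_div_right zero_le_two]
  exact exists_tendsto_rpow_min_mul_add_sub_mul (by positivity) (by positivity) (by positivity)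
    (tendsto_rpow_mul_alphaMu_cdf hαsr hμsr hΩsr hη₁ hK)
    (tendsto_rpow_mul_alphaMu_cdf hαsd hμsd hΩsd hη₁ hK)
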